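/- For every LTL formula Φ in the syntactic class TL_FG, there exists a deterministic ω-automaton A over the alphabet 2^V with a co-Büchi acceptance condition (given by a set F of states, a run is accepting iff it stays in F from some point on, i.e., visits states outside F only finitely often) such that A has at most 2^(2^|Φ|) states and A accepts exactly the set of infinite words w with w ⊨ Φ. -/

import Mathlib

/-- LTL formulas over atomic propositions `V`: the constant `true`, variables,
negation, disjunction, next (`X`), and strong until (`SU`). -/
inductive LTL (V : Type) : Type
  | tt : LTL V
  | var : V → LTL V
  | lnot : LTL V → LTL V
  | lor : LTL V → LTL V → LTL V
  | lnext : LTL V → LTL V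
  | lsu : LTL V → LTL V → LTL V

namespace LTL

variable {V : Type}

/-- Semantics: `Sat w φ i` means `w, i ⊨ φ` for an infinite word `w : ℕ → Set V`.
In particular `w, i ⊨ ψ SU φ` iff there is `k ≥ i` with `w, k ⊨ ψ` and
`w, j ⊨ φ` for all `i ≤ j < k`. -/
def Sat (w : ℕ → Set V) : LTL V → ℕ → Prop
  | tt, _ => True
  | var v, i => v ∈ w i
  | lnot φ, i => ¬ Sat w φ i
  | lor φ ψ, i => Sat w φ i ∨ Sat w ψ i
  | lnext φ, i => Sat w φ (i + 1)
  | lsu ψ φ, i => ∃ k, i ≤ k ∧ Sat w ψ k ∧ ∀ j, i ≤ j → j < k → Sat w φ j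

/-- Conjunction, as the abbreviation `¬(¬φ ∨ ¬ψ)`. -/
def land (φ ψ : LTL V) : LTL V := lnot (lor (lnot φ) (lnot ψ))

/-- `F φ := φ SU true`. -/
def lF (φ : LTL V) : LTL V := lsu φ tt

/-- `G φ := ¬ F ¬ φ`. -/
def lG (φ : LTL V) : LTL V := lnot (lF (lnot φ))

/-- Weak until: `ψ U φ := (ψ SU φ) ∨ G φ`. -/
def lwu (ψ φ : LTL V) : LTL V := lor (lsu ψ φ) (lG φ)

/-- Number of nodes of the syntax tree. -/
def size : LTL V → ℕ
  | tt => 1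
  | var _ => 1
  | lnot φ => size φ + 1
  | lor φ ψ => size φ + size ψ + 1
  | lnext φ => size φ + 1
  | lsu ψ φ => size ψ + size φ + 1

mutual
  /-- The syntactic class `TL_G`. -/
  inductive TLG : LTL V → Prop
    | var (v : V) : TLG (LTL.var v)
    | not {φ : LTL V} : TLF φ → TLG (LTL.lnot φ)
    | and {φ ψ : LTL V} : TLG φ → TLG ψ → TLG (LTL.land φ ψ)
    | or {φ ψ : LTL V} : TLG φ → TLG ψ → TLG (LTL.lor φ ψ)
    | next {φ : LTL V} : TLG φ → TLG (LTL.lnext φ)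
    | alw {φ : LTL V} : TLG φ → TLG (LTL.lG φ)
    | wu {ψ φ : LTL V} : TLG ψ → TLG φ → TLG (LTL.lwu ψ φ)
  /-- The syntactic class `TL_F`. -/
  inductive TLF : LTL V → Prop
    | var (v : V) : TLF (LTL.var v)
    | not {φ : LTL V} : TLG φ → TLF (LTL.lnot φ)
    | and {φ ψ : LTL V} : TLF φ → TLF ψ → TLF (LTL.land φ ψ)
    | or {φ ψ : LTL V} : TLF φ → TLF ψ → TLF (LTL.lor φ ψ)
    | next {φ : LTL V} : TLF φ → TLF (LTL.lnext φ)
    | ev {φ : LTL V} : TLF φ → TLF (LTL.lF φ)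
    | su {ψ φ : LTL V} : TLF ψ → TLF φ → TLF (LTL.lsu ψ φ)
end

end LTL

/-- The unique run of a deterministic automaton with transition function `δ`
and initial state `s0` on the infinite word `w`. -/
def detRun {S A : Type} (δ : S → A → S) (s0 : S) (w : ℕ → A) : ℕ → S
  | 0 => s0
  | t + 1 => δ (detRun δ s0 w t) (w t)

namespace LTL

variable {V : Type}

/-- The syntactic class `TL_Prefix`: the closure of `TL_G ∪ TL_F` under `¬, ∧, ∨`. -/
inductive TLPrefix : LTL V → Prop
  | g {φ : LTL V} : TLG φ → TLPrefix φ
  | f {φ : LTL V} : TLF φ → TLPrefix φ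
  | not {φ : LTL V} : TLPrefix φ → TLPrefix (LTL.lnot φ)
  | and {φ ψ : LTL V} : TLPrefix φ → TLPrefix ψ → TLPrefix (LTL.land φ ψ)
  | or {φ ψ : LTL V} : TLPrefix φ → TLPrefix ψ → TLPrefix (LTL.lor φ ψ)

end LTL

namespace LTL

variable {V : Type}

mutual
  /-- The syntactic class `TL_GF`. -/
  inductive TLGF : LTL V → Prop
    | pre {φ : LTL V} : TLPrefix φ → TLGF φ
    | not {φ : LTL V} : TLFG φ → TLGF (LTL.lnot φ)
    | and {φ ψ : LTL V} : TLGF φ → TLGF ψ → TLGF (LTL.land φ ψ)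
    | or {φ ψ : LTL V} : TLGF φ → TLGF ψ → TLGF (LTL.lor φ ψ)
    | next {φ : LTL V} : TLGF φ → TLGF (LTL.lnext φ)
    | alw {φ : LTL V} : TLGF φ → TLGF (LTL.lG φ)
    | wu {ψ φ : LTL V} : TLGF ψ → TLGF φ → TLGF (LTL.lwu ψ φ)
    | suF {ψ φ : LTL V} : TLF ψ → TLGF φ → TLGF (LTL.lsu ψ φ)
  /-- The syntactic class `TL_FG`. -/
  inductive TLFG : LTL V → Prop
    | pre {φ : LTL V} : TLPrefix φ → TLFG φ
    | not {φ : LTL V} : TLGF φ → TLFG (LTL.lnot φ)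
    | and {φ ψ : LTL V} : TLFG φ → TLFG ψ → TLFG (LTL.land φ ψ)
    | or {φ ψ : LTL V} : TLFG φ → TLFG ψ → TLFG (LTL.lor φ ψ)
    | next {φ : LTL V} : TLFG φ → TLFG (LTL.lnext φ)
    | ev {φ : LTL V} : TLFG φ → TLFG (LTL.lF φ)
    | su {ψ φ : LTL V} : TLFG ψ → TLFG φ → TLFG (LTL.lsu ψ φ)
    | wuG {ψ φ : LTL V} : TLFG ψ → TLG φ → TLFG (LTL.lwu ψ φ)
end

/-- The syntactic class `TL_Streett`: the closure of `TL_GF ∪ TL_FG` under `¬, ∧, ∨`. -/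
inductive TLStreett : LTL V → Prop
  | gf {φ : LTL V} : TLGF φ → TLStreett φ
  | fg {φ : LTL V} : TLFG φ → TLStreett φ
  | not {φ : LTL V} : TLStreett φ → TLStreett (LTL.lnot φ)
  | and {φ ψ : LTL V} : TLStreett φ → TLStreett ψ → TLStreett (LTL.land φ ψ)
  | or {φ ψ : LTL V} : TLStreett φ → TLStreett ψ → TLStreett (LTL.lor φ ψ)

end LTL

/-!
A predicate on the positions of a word is *tracked* by a nondeterministic co-Büchi automaton `A`
together with a claim `c` on its transitions if, along every accepting run, a claim made at time
`t` certifies the predicate at `t` (soundness), and for every admissible set `K` of positions where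
the predicate holds some accepting run makes the claim at all positions of `K` (completeness).
Trackers are built along the formula: boolean connectives take products, while `X`, until and
release add one Boolean state coordinate carrying a pending obligation. A strong obligation must be
discharged eventually, so strong until and strong release are tracked only for finite demand sets,
whereas the weak operators cope with arbitrary ones. Hence `TL_G` formulas (positively) and `TL_F`
formulas (negatively) are tracked for all demand sets, and a `TL_FG` formula `Φ` for finite ones,
by an automaton with `2 |Q| ≤ 2 ^ |Φ|`. Demanding the claim at time `0` only and determinizing with
the breakpoint construction of Miyano and Hayashi gives `3 ^ |Q| + 1 ≤ 2 ^ 2 ^ |Φ|` states.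
-/

open Filter Set

section Konig

variable {Q : Type*} {S : ℕ → Set Q} {E : ℕ → Q → Q → Prop}

def HasPathFrom (S : ℕ → Set Q) (E : ℕ → Q → Q → Prop) : ℕ → ℕ → Q → Prop
  | 0, t, q => q ∈ S t
  | d + 1, t, q => q ∈ S t ∧ ∃ q', E t q q' ∧ HasPathFrom S E d (t + 1) q'

theorem HasPathFrom.mem : ∀ {d t : ℕ} {q : Q}, HasPathFrom S E d t q → q ∈ S t
  | 0, _, _, h => h
  | _ + 1, _, _, h => h.1

theorem HasPathFrom.of_le : ∀ {d d' t : ℕ} {q : Q}, HasPathFrom S E d t q → d' ≤ d →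
    HasPathFrom S E d' t q
  | _, 0, _, _, h, _ => h.mem
  | _ + 1, _ + 1, _, _, ⟨hq, q', hE, h⟩, hd => ⟨hq, q', hE, h.of_le (by omega)⟩

theorem exists_hasPathFrom (hE : ∀ t, ∀ q' ∈ S (t + 1), ∃ q ∈ S t, E t q q') :
    ∀ d t, (S (t + d)).Nonempty → ∃ q, HasPathFrom S E d t q
  | 0, _, h => h
  | d + 1, t, h => by
    obtain ⟨q', hq'⟩ := exists_hasPathFrom hE d (t + 1) (by rwa [add_right_comm, add_assoc])
    obtain ⟨q, hq, hqq'⟩ := hE t q' hq'.mem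
    exact ⟨q, hq, q', hqq', hq'⟩

theorem eventually_not_hasPathFrom {t : ℕ} {q : Q} (h : ∃ d, ¬ HasPathFrom S E d t q) :
    ∀ᶠ d in atTop, ¬ HasPathFrom S E d t q :=
  let ⟨d, hd⟩ := h
  eventually_atTop.2 ⟨d, fun _ hd' h' => hd (h'.of_le hd')⟩

theorem exists_succ_of_forall_hasPathFrom [Finite Q] {t : ℕ} {q : Q}
    (h : ∀ d, HasPathFrom S E d t q) :
    ∃ q', E t q q' ∧ ∀ d, HasPathFrom S E d (t + 1) q' := by
  by_contra! hno
  have hfail : ∀ᶠ d in atTop, ∀ q', E t q q' → ¬ HasPathFrom S E d (t + 1) q' :=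
    eventually_all.2 fun q' => by
      by_cases hq' : E t q q'
      · exact (eventually_not_hasPathFrom (hno q' hq')).mono fun _ h _ => h
      · exact .of_forall fun _ h => absurd h hq'
  obtain ⟨d, hd⟩ := hfail.exists
  obtain ⟨-, q', hE, hq'⟩ := h (d + 1)
  exact hd q' hE hq'

theorem exists_path_of_frequently_nonempty [Finite Q] (hS : ∃ᶠ t in atTop, (S t).Nonempty)
    (hE : ∀ t, ∀ q' ∈ S (t + 1), ∃ q ∈ S t, E t q q') :
    ∃ b : ℕ → Q, ∀ t, b t ∈ S t ∧ E t (b t) (b (t + 1)) := by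
  obtain ⟨q₀, hq₀⟩ : ∃ q, ∀ d, HasPathFrom S E d 0 q := by
    by_contra! hno
    have hfail : ∀ᶠ d in atTop, ∀ q, ¬ HasPathFrom S E d 0 q :=
      eventually_all.2 fun q => eventually_not_hasPathFrom (hno q)
    obtain ⟨d, hd, hne⟩ := (hfail.and_frequently hS).exists
    obtain ⟨q, hq⟩ := exists_hasPathFrom hE d 0 (by rwa [zero_add])
    exact hd q hq
  choose! next hnext using fun t q (h : ∀ d, HasPathFrom S E d t q) =>
    exists_succ_of_forall_hasPathFrom h
  let b : ℕ → Q := fun t => Nat.rec q₀ next t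
  have hb : ∀ t d, HasPathFrom S E d t (b t) := by
    intro t
    induction t with
    | zero => exact hq₀
    | succ t ih => exact (hnext t (b t) ih).2
  exact ⟨b, fun t => ⟨(hb t 0).mem, (hnext t (b t) (hb t)).1⟩⟩

end Konig

namespace LTL

section Operators

variable {p q : ℕ → Prop} {t : ℕ}

-- Argument order as in `lsu`: `p` eventually, `q` until then.
def StrongUntil (p q : ℕ → Prop) (t : ℕ) : Prop :=
  ∃ k, t ≤ k ∧ p k ∧ ∀ j, t ≤ j → j < k → q j

def WeakUntil (p q : ℕ → Prop) (t : ℕ) : Prop :=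
  StrongUntil p q t ∨ ∀ j, t ≤ j → q j

def StrongRelease (p q : ℕ → Prop) : ℕ → Prop :=
  StrongUntil (fun j => p j ∧ q j) q

def WeakRelease (p q : ℕ → Prop) : ℕ → Prop :=
  WeakUntil (fun j => p j ∧ q j) q

theorem StrongUntil.mono {p' q' : ℕ → Prop} (h : StrongUntil p q t) (hp : ∀ j, p j → p' j)
    (hq : ∀ j, q j → q' j) : StrongUntil p' q' t :=
  let ⟨k, htk, hpk, hqk⟩ := h
  ⟨k, htk, hp k hpk, fun j hj hjk => hq j (hqk j hj hjk)⟩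

theorem WeakUntil.mono {p' q' : ℕ → Prop} (h : WeakUntil p q t) (hp : ∀ j, p j → p' j)
    (hq : ∀ j, q j → q' j) : WeakUntil p' q' t :=
  h.imp (·.mono hp hq) fun hg j hj => hq j (hg j hj)

theorem not_strongUntil_iff :
    ¬ StrongUntil p q t ↔ WeakRelease (fun j => ¬ q j) (fun j => ¬ p j) t := by
  classical
  constructor
  · intro h
    have hnp : ∀ k, t ≤ k → (∀ j, t ≤ j → j < k → q j) → ¬ p k :=
      fun k htk hq hp => h ⟨k, htk, hp, hq⟩
    by_cases hfail : ∃ k, t ≤ k ∧ ¬ q k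
    · obtain ⟨htk, hqk⟩ := Nat.find_spec hfail
      have hq : ∀ j, t ≤ j → j < Nat.find hfail → q j := fun j htj hjk =>
        not_not.1 fun hqj => Nat.find_min hfail hjk ⟨htj, hqj⟩
      exact .inl ⟨_, htk, ⟨hqk, hnp _ htk hq⟩,
        fun j htj hjk => hnp j htj fun i hti hij => hq i hti (hij.trans hjk)⟩
    · push Not at hfail
      exact .inr fun k htk => hnp k htk fun j htj _ => hfail j htj
  · rintro (⟨k, htk, ⟨hqk, hpk⟩, hnp⟩ | hnp) ⟨m, htm, hpm, hq⟩
    · rcases lt_trichotomy m k with hmk | rfl | hkm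
      exacts [hnp m htm hmk hpm, hpk hpm, hqk (hq k htk hkm)]
    · exact hnp m htm hpm

theorem not_weakUntil_iff :
    ¬ WeakUntil p q t ↔ StrongRelease (fun j => ¬ q j) (fun j => ¬ p j) t := by
  rw [WeakUntil, not_or, not_strongUntil_iff]
  constructor
  · rintro ⟨h | h, hq⟩
    · exact h
    · push Not at hq
      obtain ⟨k, htk, hqk⟩ := hq
      exact ⟨k, htk, ⟨hqk, h k htk⟩, fun j htj _ => h j htj⟩
  · intro h
    obtain ⟨k, htk, ⟨hqk, -⟩, -⟩ := id h
    exact ⟨.inl h, fun hq => hqk (hq k htk)⟩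

theorem strongUntil_or_forall_of_forall_imp {o : ℕ → Prop}
    (hstep : ∀ j, o j → p j ∨ (q j ∧ o (j + 1))) (ht : o t) :
    StrongUntil p q t ∨ ∀ j, t ≤ j → o j ∧ q j := by
  classical
  have hrun : ∀ k, t ≤ k → (∀ j, t ≤ j → j < k → ¬ p j) →
      o k ∧ ∀ j, t ≤ j → j < k → q j := by
    intro k hk
    induction k, hk using Nat.le_induction with
    | base => exact fun _ => ⟨ht, fun j hj hjt => absurd hjt (by omega)⟩
    | succ k hk ih =>
      intro hnp
      obtain ⟨hok, hq⟩ := ih fun j hj hjk => hnp j hj (by omega)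
      obtain ⟨hqk, hok'⟩ := (hstep k hok).resolve_left (hnp k hk (by omega))
      refine ⟨hok', fun j hj hjk => ?_⟩
      rcases Nat.lt_succ_iff_lt_or_eq.1 hjk with hjk | rfl
      exacts [hq j hj hjk, hqk]
  by_cases hp : ∃ k, t ≤ k ∧ p k
  · have hmin : ∀ j, t ≤ j → j < Nat.find hp → ¬ p j := fun j hj hjk hpj =>
      Nat.find_min hp hjk ⟨hj, hpj⟩
    exact .inl ⟨_, (Nat.find_spec hp).1, (Nat.find_spec hp).2,
      (hrun _ (Nat.find_spec hp).1 hmin).2⟩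
  · push Not at hp
    exact .inr fun j hj => ⟨(hrun j hj fun i hi _ => hp i hi).1,
      (hrun (j + 1) (by omega) fun i hi _ => hp i hi).2 j hj (by omega)⟩

theorem weakUntil_of_forall_imp {o : ℕ → Prop}
    (hstep : ∀ j, o j → p j ∨ (q j ∧ o (j + 1))) (ht : o t) : WeakUntil p q t :=
  (strongUntil_or_forall_of_forall_imp hstep ht).imp_right fun h j hj => (h j hj).2

theorem strongUntil_of_forall_imp {o : ℕ → Prop}
    (hstep : ∀ j, o j → p j ∨ (q j ∧ o (j + 1))) (hfin : ∀ᶠ j in atTop, ¬ o j) (ht : o t) :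
    StrongUntil p q t := by
  refine (strongUntil_or_forall_of_forall_imp hstep ht).resolve_right fun h => ?_
  obtain ⟨j, hj⟩ := (hfin.and (eventually_ge_atTop t)).exists
  exact hj.1 (h j hj.2).1

-- The positions where the obligation bit is switched on in the runs built for completeness.
def pending (K : Set ℕ) (p q : ℕ → Prop) : Set ℕ :=
  {x | ∃ k ∈ K, k ≤ x ∧ ∀ j, k ≤ j → j < x → q j ∧ ¬ p j}

variable {K : Set ℕ} {x : ℕ}

theorem subset_pending : K ⊆ pending K p q :=
  fun k hk => ⟨k, hk, le_rfl, fun j hj hjk => absurd hjk (by omega)⟩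

theorem pending_step (hK : ∀ k ∈ K, WeakUntil p q k) (hx : x ∈ pending K p q) (hpx : ¬ p x) :
    q x ∧ x + 1 ∈ pending K p q := by
  obtain ⟨k, hk, hkx, hwait⟩ := hx
  have hqx : q x := by
    rcases hK k hk with ⟨m, hkm, hpm, hq⟩ | hq
    · refine hq x hkx (lt_of_not_ge fun hmx => ?_)
      rcases hmx.lt_or_eq with hmx | rfl
      exacts [(hwait m hkm hmx).2 hpm, hpx hpm]
    · exact hq x hkx
  refine ⟨hqx, k, hk, by omega, fun j hkj hjx => ?_⟩
  rcases Nat.lt_succ_iff_lt_or_eq.1 hjx with hjx | rfl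
  exacts [hwait j hkj hjx, ⟨hqx, hpx⟩]

theorem pending_inter_finite (hK : K.Finite) : (pending K p q ∩ {x | p x}).Finite := by
  have hfirst : ∀ k ∈ K, {x | k ≤ x ∧ p x ∧ ∀ j, k ≤ j → j < x → ¬ p j}.Finite := by
    refine fun k _ => Subsingleton.finite fun x ⟨hkx, hpx, hx⟩ y ⟨hky, hpy, hy⟩ => ?_
    by_contra hne
    rcases Ne.lt_or_gt hne with hxy | hxy
    exacts [hy x hkx hxy hpx, hx y hky hxy hpy]
  refine (hK.biUnion hfirst).subset ?_
  rintro x ⟨⟨k, hk, hkx, hwait⟩, hpx⟩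
  exact mem_biUnion hk ⟨hkx, hpx, fun j hkj hjx => (hwait j hkj hjx).2⟩

theorem pending_finite (hK : K.Finite) (hU : ∀ k ∈ K, StrongUntil p q k) :
    (pending K p q).Finite := by
  have hbdd : ∀ k ∈ K, {x | k ≤ x ∧ ∀ j, k ≤ j → j < x → ¬ p j}.Finite := by
    intro k hk
    obtain ⟨m, hkm, hpm, -⟩ := hU k hk
    exact (finite_Iic m).subset fun x hx => not_lt.1 fun hmx => hx.2 m hkm hmx hpm
  refine (hK.biUnion hbdd).subset ?_
  rintro x ⟨k, hk, hkx, hwait⟩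
  exact mem_biUnion hk ⟨hkx, fun j hkj hjx => (hwait j hkj hjx).2⟩

end Operators

inductive Demands
  | finite
  | all

namespace Demands

def Admits : Demands → Set ℕ → Prop
  | finite, K => K.Finite
  | all, _ => True

variable {d : Demands} {K : Set ℕ}

theorem Admits.mono {K' : Set ℕ} (h : d.Admits K) (hK : K' ⊆ K) : d.Admits K' := by
  cases d
  exacts [Set.Finite.subset h hK, trivial]

theorem Admits.image (h : d.Admits K) (f : ℕ → ℕ) : d.Admits (f '' K) := by
  cases d
  exacts [Set.Finite.image f h, trivial]

theorem Admits.pending_inter {p q : ℕ → Prop} (h : d.Admits K) :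
    d.Admits (pending K p q ∩ {x | p x}) := by
  cases d
  exacts [pending_inter_finite h, trivial]

end Demands

-- No initial states: a run is pinned down only by the claims it is required to make.
structure NCW (V Q : Type) where
  step : Set V → Q → Q → Prop
  acc : Q → Prop

namespace NCW

variable {V Q Q₁ Q₂ : Type} {w : ℕ → Set V}

def Accepts (A : NCW V Q) (w : ℕ → Set V) (b : ℕ → Q) : Prop :=
  (∀ t, A.step (w t) (b t) (b (t + 1))) ∧ ∀ᶠ t in atTop, A.acc (b t)

def Sound (A : NCW V Q) (c : Set V → Q → Q → Prop) (P : (ℕ → Set V) → ℕ → Prop) : Prop :=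
  ∀ w b, A.Accepts w b → ∀ t, c (w t) (b t) (b (t + 1)) → P w t

def Complete (A : NCW V Q) (c : Set V → Q → Q → Prop) (d : Demands)
    (P : (ℕ → Set V) → ℕ → Prop) : Prop :=
  ∀ w K, d.Admits K → (∀ k ∈ K, P w k) →
    ∃ b, A.Accepts w b ∧ ∀ k ∈ K, c (w k) (b k) (b (k + 1))

section Claims

variable {A : NCW V Q} {c₁ c₂ : Set V → Q → Q → Prop} {P₁ P₂ : (ℕ → Set V) → ℕ → Prop}

theorem Sound.and (h₁ : A.Sound c₁ P₁) (h₂ : A.Sound c₂ P₂) :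
    A.Sound (fun a q q' => c₁ a q q' ∧ c₂ a q q') (fun w t => P₁ w t ∧ P₂ w t) :=
  fun w b hb t hc => ⟨h₁ w b hb t hc.1, h₂ w b hb t hc.2⟩

theorem Sound.or (h₁ : A.Sound c₁ P₁) (h₂ : A.Sound c₂ P₂) :
    A.Sound (fun a q q' => c₁ a q q' ∨ c₂ a q q') (fun w t => P₁ w t ∨ P₂ w t) :=
  fun w b hb t hc => hc.imp (h₁ w b hb t) (h₂ w b hb t)

end Claims

def prod (A₁ : NCW V Q₁) (A₂ : NCW V Q₂) : NCW V (Q₁ × Q₂) where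
  step a q q' := A₁.step a q.1 q'.1 ∧ A₂.step a q.2 q'.2
  acc q := A₁.acc q.1 ∧ A₂.acc q.2

section Prod

variable {A₁ : NCW V Q₁} {A₂ : NCW V Q₂}

theorem accepts_prod_iff {b : ℕ → Q₁ × Q₂} : (A₁.prod A₂).Accepts w b ↔
    A₁.Accepts w (fun t => (b t).1) ∧ A₂.Accepts w (fun t => (b t).2) := by
  simp only [Accepts, prod, forall_and, eventually_and]
  tauto

theorem Accepts.prod {b₁ : ℕ → Q₁} {b₂ : ℕ → Q₂} (h₁ : A₁.Accepts w b₁)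
    (h₂ : A₂.Accepts w b₂) : (A₁.prod A₂).Accepts w (fun t => (b₁ t, b₂ t)) :=
  accepts_prod_iff.2 ⟨h₁, h₂⟩

theorem Sound.fst {c : Set V → Q₁ → Q₁ → Prop} {P : (ℕ → Set V) → ℕ → Prop}
    (h : A₁.Sound c P) : (A₁.prod A₂).Sound (fun a q q' => c a q.1 q'.1) P :=
  fun w _ hb => h w _ (accepts_prod_iff.1 hb).1

theorem Sound.snd {c : Set V → Q₂ → Q₂ → Prop} {P : (ℕ → Set V) → ℕ → Prop}
    (h : A₂.Sound c P) : (A₁.prod A₂).Sound (fun a q q' => c a q.2 q'.2) P :=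
  fun w _ hb => h w _ (accepts_prod_iff.1 hb).2

end Prod

def next (A : NCW V Q) (c : Set V → Q → Q → Prop) : NCW V (Q × Prop) where
  step a q q' := A.step a q.1 q'.1 ∧ (q.2 → c a q.1 q'.1)
  acc q := A.acc q.1

-- The extra coordinate is a pending obligation "`g` eventually, `h` until then"; a strong one
-- may not stay pending forever on an accepting run.
def untilBit (A : NCW V Q) (g h : Set V → Q → Q → Prop) (strong : Bool) : NCW V (Q × Prop) where
  step a q q' := A.step a q.1 q'.1 ∧ (q.2 → g a q.1 q'.1 ∨ (h a q.1 q'.1 ∧ q'.2))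
  acc q := A.acc q.1 ∧ (strong → ¬ q.2)

section UntilBit

variable {A : NCW V Q} {g h : Set V → Q → Q → Prop} {strong : Bool}
  {P₁ P₂ : (ℕ → Set V) → ℕ → Prop}

theorem Accepts.of_untilBit {b : ℕ → Q × Prop} (hb : (A.untilBit g h strong).Accepts w b) :
    A.Accepts w (fun t => (b t).1) :=
  ⟨fun t => (hb.1 t).1, hb.2.mono fun _ ht => ht.1⟩

theorem accepts_untilBit {b : ℕ → Q} (hb : A.Accepts w b) {U : Set ℕ}
    (hU : ∀ x ∈ U, g (w x) (b x) (b (x + 1)) ∨ (h (w x) (b x) (b (x + 1)) ∧ x + 1 ∈ U))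
    (hfin : strong → U.Finite) :
    (A.untilBit g h strong).Accepts w (fun t => (b t, t ∈ U)) := by
  refine ⟨fun t => ⟨hb.1 t, hU t⟩, ?_⟩
  cases strong
  · exact hb.2.mono fun _ ht => ⟨ht, nofun⟩
  · have hU' : ∀ᶠ t in atTop, t ∉ U := by
      simpa only [Nat.cofinite_eq_atTop] using (hfin rfl).eventually_cofinite_notMem
    exact (hb.2.and hU').mono fun _ ht => ⟨ht.1, fun _ => ht.2⟩

theorem exists_accepts_untilBit {p₁ p₂ : ℕ → Prop} {K : Set ℕ} (hK : ∀ k ∈ K, WeakUntil p₁ p₂ k)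
    {b : ℕ → Q} (hb : A.Accepts w b)
    (hg : ∀ x ∈ pending K p₁ p₂, p₁ x → g (w x) (b x) (b (x + 1)))
    (hh : ∀ x ∈ pending K p₁ p₂, ¬ p₁ x → h (w x) (b x) (b (x + 1)))
    (hfin : strong → (pending K p₁ p₂).Finite) :
    ∃ b', (A.untilBit g h strong).Accepts w b' ∧ ∀ k ∈ K, (b' k).2 := by
  refine ⟨_, accepts_untilBit (U := pending K p₁ p₂) hb (fun x hx => ?_) hfin,
    fun k hk => subset_pending hk⟩
  by_cases hx₁ : p₁ x
  exacts [.inl (hg x hx hx₁), .inr ⟨hh x hx hx₁, (pending_step hK hx hx₁).2⟩]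

theorem sound_untilBit_weakUntil (hg : A.Sound g P₁) (hh : A.Sound h P₂) :
    (A.untilBit g h strong).Sound (fun _ q _ => q.2) (fun w => WeakUntil (P₁ w) (P₂ w)) := by
  intro w b hb t ht
  refine (weakUntil_of_forall_imp (o := fun j => (b j).2) (fun j => (hb.1 j).2) ht).mono ?_ ?_
  exacts [hg w _ hb.of_untilBit, hh w _ hb.of_untilBit]

theorem sound_untilBit_strongUntil (hg : A.Sound g P₁) (hh : A.Sound h P₂) :
    (A.untilBit g h true).Sound (fun _ q _ => q.2) (fun w => StrongUntil (P₁ w) (P₂ w)) := by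
  intro w b hb t ht
  refine (strongUntil_of_forall_imp (o := fun j => (b j).2) (fun j => (hb.1 j).2)
    (hb.2.mono fun _ hj => hj.2 rfl) ht).mono ?_ ?_
  exacts [hg w _ hb.of_untilBit, hh w _ hb.of_untilBit]

end UntilBit

end NCW

section Cardinality

variable {Q Q₁ Q₂ : Type} {n n₁ n₂ : ℕ}

theorem four_mul_card_prod_le (h₁ : 2 * Nat.card Q₁ ≤ 2 ^ n₁) (h₂ : 2 * Nat.card Q₂ ≤ 2 ^ n₂) :
    4 * Nat.card (Q₁ × Q₂) ≤ 2 ^ (n₁ + n₂) := by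
  rw [Nat.card_prod, pow_add]
  calc 4 * (Nat.card Q₁ * Nat.card Q₂) = (2 * Nat.card Q₁) * (2 * Nat.card Q₂) := by ring
    _ ≤ 2 ^ n₁ * 2 ^ n₂ := Nat.mul_le_mul h₁ h₂

theorem card_prod_prop (Q : Type) : Nat.card (Q × Prop) = 2 * Nat.card Q := by
  simp [Nat.card_prod, mul_comm]

theorem card_untilBit_le (h₁ : 2 * Nat.card Q₁ ≤ 2 ^ n₁) (h₂ : 2 * Nat.card Q₂ ≤ 2 ^ n₂) :
    2 * Nat.card ((Q₁ × Q₂) × Prop) ≤ 2 ^ (n₁ + n₂ + 1) := by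
  rw [card_prod_prop, pow_succ]
  linarith [four_mul_card_prod_le h₁ h₂]

theorem three_pow_add_one_le {c : ℕ} (h : 2 * c ≤ 2 ^ n) : 3 ^ c + 1 ≤ 2 ^ 2 ^ n := by
  rcases Nat.eq_zero_or_pos c with rfl | hc
  · exact Nat.pow_le_pow_right two_pos Nat.one_le_two_pow
  · calc 3 ^ c + 1 ≤ 4 ^ c := Nat.pow_lt_pow_left (by norm_num) hc.ne'
      _ = 2 ^ (2 * c) := by rw [pow_mul]; norm_num
      _ ≤ 2 ^ 2 ^ n := Nat.pow_le_pow_right two_pos h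

end Cardinality

open NCW

variable {V : Type}

-- `2 * |Q| ≤ 2 ^ n` is `|Q| ≤ 2 ^ (n - 1)` without truncated subtraction.
def Tracks (d : Demands) (n : ℕ) (P : (ℕ → Set V) → ℕ → Prop) : Prop :=
  ∃ (Q : Type) (_ : Finite Q) (A : NCW V Q) (c : Set V → Q → Q → Prop),
    2 * Nat.card Q ≤ 2 ^ n ∧ A.Sound c P ∧ A.Complete c d P

namespace Tracks

variable {d : Demands} {n m n₁ n₂ : ℕ} {P P' P₁ P₂ : (ℕ → Set V) → ℕ → Prop}

theorem mono (h : Tracks d n P) (hn : n ≤ m) : Tracks d m P := by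
  obtain ⟨Q, _, A, c, hcard, hs, hc⟩ := h
  exact ⟨Q, inferInstance, A, c, hcard.trans (Nat.pow_le_pow_right two_pos hn), hs, hc⟩

theorem congr (h : Tracks d n P) (hP : ∀ w t, P w t ↔ P' w t) : Tracks d n P' := by
  obtain ⟨Q, _, A, c, hcard, hs, hc⟩ := h
  exact ⟨Q, inferInstance, A, c, hcard, fun w b hb t ht => (hP w t).1 (hs w b hb t ht),
    fun w K hK hP' => hc w K hK fun k hk => (hP w k).2 (hP' k hk)⟩

theorem of_all (h : Tracks .all n P) : Tracks d n P := by
  obtain ⟨Q, _, A, c, hcard, hs, hc⟩ := h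
  exact ⟨Q, inferInstance, A, c, hcard, hs, fun w K _ => hc w K trivial⟩

theorem atom (d : Demands) (p : Set V → Prop) : Tracks d 1 (fun w t => p (w t)) :=
  ⟨Unit, inferInstance, ⟨fun _ _ _ => True, fun _ => True⟩, fun a _ _ => p a, by simp,
    fun _ _ _ _ hp => hp,
    fun _ _ _ hK => ⟨fun _ => (), ⟨fun _ => trivial, .of_forall fun _ => trivial⟩, hK⟩⟩

theorem or (h₁ : Tracks d n₁ P₁) (h₂ : Tracks d n₂ P₂) :
    Tracks d (n₁ + n₂) (fun w t => P₁ w t ∨ P₂ w t) := by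
  obtain ⟨Q₁, _, A₁, c₁, hn₁, hs₁, hc₁⟩ := h₁
  obtain ⟨Q₂, _, A₂, c₂, hn₂, hs₂, hc₂⟩ := h₂
  refine ⟨_, inferInstance, A₁.prod A₂, fun a q q' => c₁ a q.1 q'.1 ∨ c₂ a q.2 q'.2,
    by linarith [four_mul_card_prod_le hn₁ hn₂], hs₁.fst.or hs₂.snd, fun w K hK hP => ?_⟩
  obtain ⟨b₁, hb₁, hcl₁⟩ := hc₁ w {k ∈ K | P₁ w k} (hK.mono (sep_subset _ _)) fun k hk => hk.2
  obtain ⟨b₂, hb₂, hcl₂⟩ := hc₂ w {k ∈ K | ¬ P₁ w k} (hK.mono (sep_subset _ _))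
    fun k hk => (hP k hk.1).resolve_left hk.2
  refine ⟨_, hb₁.prod hb₂, fun k hk => ?_⟩
  by_cases hk₁ : P₁ w k
  exacts [.inl (hcl₁ k ⟨hk, hk₁⟩), .inr (hcl₂ k ⟨hk, hk₁⟩)]

theorem and (h₁ : Tracks d n₁ P₁) (h₂ : Tracks d n₂ P₂) :
    Tracks d (n₁ + n₂) (fun w t => P₁ w t ∧ P₂ w t) := by
  obtain ⟨Q₁, _, A₁, c₁, hn₁, hs₁, hc₁⟩ := h₁
  obtain ⟨Q₂, _, A₂, c₂, hn₂, hs₂, hc₂⟩ := h₂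
  refine ⟨_, inferInstance, A₁.prod A₂, fun a q q' => c₁ a q.1 q'.1 ∧ c₂ a q.2 q'.2,
    by linarith [four_mul_card_prod_le hn₁ hn₂], hs₁.fst.and hs₂.snd, fun w K hK hP => ?_⟩
  obtain ⟨b₁, hb₁, hcl₁⟩ := hc₁ w K hK fun k hk => (hP k hk).1
  obtain ⟨b₂, hb₂, hcl₂⟩ := hc₂ w K hK fun k hk => (hP k hk).2
  exact ⟨_, hb₁.prod hb₂, fun k hk => ⟨hcl₁ k hk, hcl₂ k hk⟩⟩

theorem next (h : Tracks d n P) : Tracks d (n + 1) (fun w t => P w (t + 1)) := by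
  obtain ⟨Q, _, A, c, hn, hs, hc⟩ := h
  refine ⟨_, inferInstance, A.next c, fun _ _ q' => q'.2, ?_, fun w b hb t ht => ?_,
    fun w K hK hP => ?_⟩
  · rw [card_prod_prop, pow_succ]
    omega
  · exact hs w _ ⟨fun t => (hb.1 t).1, hb.2⟩ (t + 1) ((hb.1 (t + 1)).2 ht)
  · obtain ⟨b, hb, hcl⟩ := hc w ((· + 1) '' K) (hK.image _)
      (by rintro _ ⟨k, hk, rfl⟩; exact hP k hk)
    exact ⟨fun t => (b t, t ∈ (· + 1) '' K), ⟨fun t => ⟨hb.1 t, hcl t⟩, hb.2⟩,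
      fun k hk => ⟨k, hk, rfl⟩⟩

theorem strongUntil (h₁ : Tracks .finite n₁ P₁) (h₂ : Tracks .finite n₂ P₂) :
    Tracks .finite (n₁ + n₂ + 1) (fun w => StrongUntil (P₁ w) (P₂ w)) := by
  obtain ⟨Q₁, _, A₁, c₁, hn₁, hs₁, hc₁⟩ := h₁
  obtain ⟨Q₂, _, A₂, c₂, hn₂, hs₂, hc₂⟩ := h₂
  refine ⟨_, inferInstance, (A₁.prod A₂).untilBit (fun a q q' => c₁ a q.1 q'.1)
    (fun a q q' => c₂ a q.2 q'.2) true, fun _ q _ => q.2, card_untilBit_le hn₁ hn₂,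
    sound_untilBit_strongUntil hs₁.fst hs₂.snd, fun w K hK hP => ?_⟩
  have hW : ∀ k ∈ K, WeakUntil (P₁ w) (P₂ w) k := fun k hk => .inl (hP k hk)
  set U := pending K (P₁ w) (P₂ w)
  have hU : U.Finite := pending_finite hK hP
  obtain ⟨b₁, hb₁, hcl₁⟩ := hc₁ w (U ∩ {x | P₁ w x}) (hU.subset inter_subset_left)
    fun x hx => hx.2
  obtain ⟨b₂, hb₂, hcl₂⟩ := hc₂ w (U \ {x | P₁ w x}) (hU.subset sdiff_subset)
    fun x hx => (pending_step hW hx.1 hx.2).1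
  exact exists_accepts_untilBit hW (hb₁.prod hb₂) (fun x hx hx₁ => hcl₁ x ⟨hx, hx₁⟩)
    (fun x hx hx₁ => hcl₂ x ⟨hx, hx₁⟩) fun _ => hU

theorem weakUntil (h₁ : Tracks d n₁ P₁) (h₂ : Tracks .all n₂ P₂) :
    Tracks d (n₁ + n₂ + 1) (fun w => WeakUntil (P₁ w) (P₂ w)) := by
  obtain ⟨Q₁, _, A₁, c₁, hn₁, hs₁, hc₁⟩ := h₁
  obtain ⟨Q₂, _, A₂, c₂, hn₂, hs₂, hc₂⟩ := h₂
  refine ⟨_, inferInstance, (A₁.prod A₂).untilBit (fun a q q' => c₁ a q.1 q'.1)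
    (fun a q q' => c₂ a q.2 q'.2) false, fun _ q _ => q.2, card_untilBit_le hn₁ hn₂,
    sound_untilBit_weakUntil hs₁.fst hs₂.snd, fun w K hK hP => ?_⟩
  set U := pending K (P₁ w) (P₂ w)
  obtain ⟨b₁, hb₁, hcl₁⟩ := hc₁ w (U ∩ {x | P₁ w x}) hK.pending_inter fun x hx => hx.2
  obtain ⟨b₂, hb₂, hcl₂⟩ := hc₂ w (U \ {x | P₁ w x}) trivial
    fun x hx => (pending_step hP hx.1 hx.2).1
  exact exists_accepts_untilBit hP (hb₁.prod hb₂) (fun x hx hx₁ => hcl₁ x ⟨hx, hx₁⟩)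
    (fun x hx hx₁ => hcl₂ x ⟨hx, hx₁⟩) nofun

theorem weakRelease (h₁ : Tracks d n₁ P₁) (h₂ : Tracks .all n₂ P₂) :
    Tracks d (n₁ + n₂ + 1) (fun w => WeakRelease (P₁ w) (P₂ w)) := by
  obtain ⟨Q₁, _, A₁, c₁, hn₁, hs₁, hc₁⟩ := h₁
  obtain ⟨Q₂, _, A₂, c₂, hn₂, hs₂, hc₂⟩ := h₂
  refine ⟨_, inferInstance, (A₁.prod A₂).untilBit (fun a q q' => c₁ a q.1 q'.1 ∧ c₂ a q.2 q'.2)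
    (fun a q q' => c₂ a q.2 q'.2) false, fun _ q _ => q.2, card_untilBit_le hn₁ hn₂,
    sound_untilBit_weakUntil (hs₁.fst.and hs₂.snd) hs₂.snd, fun w K hK hP => ?_⟩
  set U := pending K (fun j => P₁ w j ∧ P₂ w j) (P₂ w)
  obtain ⟨b₁, hb₁, hcl₁⟩ := hc₁ w (U ∩ {x | P₁ w x ∧ P₂ w x}) hK.pending_inter
    fun x hx => hx.2.1
  obtain ⟨b₂, hb₂, hcl₂⟩ := hc₂ w U trivial fun x hx =>
    (em (P₁ w x ∧ P₂ w x)).elim And.right fun hx₁ => (pending_step hP hx hx₁).1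
  exact exists_accepts_untilBit hP (hb₁.prod hb₂) (fun x hx hx₁ => ⟨hcl₁ x ⟨hx, hx₁⟩, hcl₂ x hx⟩)
    (fun x hx _ => hcl₂ x hx) nofun

theorem strongRelease (h₁ : Tracks .finite n₁ P₁) (h₂ : Tracks .finite n₂ P₂) :
    Tracks .finite (n₁ + n₂ + 1) (fun w => StrongRelease (P₁ w) (P₂ w)) := by
  obtain ⟨Q₁, _, A₁, c₁, hn₁, hs₁, hc₁⟩ := h₁
  obtain ⟨Q₂, _, A₂, c₂, hn₂, hs₂, hc₂⟩ := h₂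
  refine ⟨_, inferInstance, (A₁.prod A₂).untilBit (fun a q q' => c₁ a q.1 q'.1 ∧ c₂ a q.2 q'.2)
    (fun a q q' => c₂ a q.2 q'.2) true, fun _ q _ => q.2, card_untilBit_le hn₁ hn₂,
    sound_untilBit_strongUntil (hs₁.fst.and hs₂.snd) hs₂.snd, fun w K hK hP => ?_⟩
  have hW : ∀ k ∈ K, WeakUntil (fun j => P₁ w j ∧ P₂ w j) (P₂ w) k := fun k hk => .inl (hP k hk)
  set U := pending K (fun j => P₁ w j ∧ P₂ w j) (P₂ w)
  have hU : U.Finite := pending_finite hK hP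
  obtain ⟨b₁, hb₁, hcl₁⟩ := hc₁ w (U ∩ {x | P₁ w x ∧ P₂ w x}) (hU.subset inter_subset_left)
    fun x hx => hx.2.1
  obtain ⟨b₂, hb₂, hcl₂⟩ := hc₂ w U hU fun x hx =>
    (em (P₁ w x ∧ P₂ w x)).elim And.right fun hx₁ => (pending_step hW hx hx₁).1
  exact exists_accepts_untilBit hW (hb₁.prod hb₂) (fun x hx hx₁ => ⟨hcl₁ x ⟨hx, hx₁⟩, hcl₂ x hx⟩)
    (fun x hx _ => hcl₂ x hx) fun _ => hU

end Tracks

section Formulas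

variable {d : Demands} {w : ℕ → Set V} {φ ψ : LTL V} {t : ℕ}

theorem sat_lG : Sat w (lG φ) t ↔ ∀ j, t ≤ j → Sat w φ j := by
  refine ⟨fun h j hj => ?_, fun h ⟨k, hk, hnk, _⟩ => hnk (h k hk)⟩
  by_contra hnj
  exact h ⟨j, hj, hnj, fun _ _ _ => trivial⟩

theorem sat_lwu : Sat w (lwu ψ φ) t ↔ WeakUntil (Sat w ψ) (Sat w φ) t :=
  or_congr Iff.rfl sat_lG

abbrev TracksSat (d : Demands) (φ : LTL V) : Prop :=
  Tracks d φ.size (fun w t => Sat w φ t)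

abbrev TracksUnsat (d : Demands) (φ : LTL V) : Prop :=
  Tracks d φ.size (fun w t => ¬ Sat w φ t)

theorem tracksSat_var (d : Demands) (v : V) : TracksSat d (var v) :=
  Tracks.atom d (v ∈ ·)

theorem tracksUnsat_var (d : Demands) (v : V) : TracksUnsat d (var v) :=
  Tracks.atom d (v ∉ ·)

theorem tracksSat_tt (d : Demands) : TracksSat d (tt : LTL V) :=
  Tracks.atom d fun _ => True

theorem tracksUnsat_tt (d : Demands) : TracksUnsat d (tt : LTL V) :=
  Tracks.atom d fun _ => ¬ True

theorem tracksSat_lnot (h : TracksUnsat d φ) : TracksSat d (lnot φ) :=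
  h.mono (Nat.le_succ _)

theorem tracksUnsat_lnot (h : TracksSat d φ) : TracksUnsat d (lnot φ) :=
  (h.congr fun _ _ => not_not.symm).mono (Nat.le_succ _)

theorem tracksSat_lor (h₁ : TracksSat d φ) (h₂ : TracksSat d ψ) : TracksSat d (lor φ ψ) :=
  (h₁.or h₂).mono (Nat.le_succ _)

theorem tracksUnsat_lor (h₁ : TracksUnsat d φ) (h₂ : TracksUnsat d ψ) :
    TracksUnsat d (lor φ ψ) :=
  ((h₁.and h₂).congr fun _ _ => not_or.symm).mono (Nat.le_succ _)

theorem tracksSat_land (h₁ : TracksSat d φ) (h₂ : TracksSat d ψ) : TracksSat d (land φ ψ) :=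
  tracksSat_lnot (tracksUnsat_lor (tracksUnsat_lnot h₁) (tracksUnsat_lnot h₂))

theorem tracksUnsat_land (h₁ : TracksUnsat d φ) (h₂ : TracksUnsat d ψ) :
    TracksUnsat d (land φ ψ) :=
  tracksUnsat_lnot (tracksSat_lor (tracksSat_lnot h₁) (tracksSat_lnot h₂))

theorem tracksSat_lnext (h : TracksSat d φ) : TracksSat d (lnext φ) :=
  h.next

theorem tracksUnsat_lnext (h : TracksUnsat d φ) : TracksUnsat d (lnext φ) :=
  h.next

theorem tracksSat_lsu (h₁ : TracksSat .finite ψ) (h₂ : TracksSat .finite φ) :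
    TracksSat .finite (lsu ψ φ) :=
  h₁.strongUntil h₂

theorem tracksUnsat_lsu (h₁ : TracksUnsat .all ψ) (h₂ : TracksUnsat d φ) :
    TracksUnsat d (lsu ψ φ) :=
  ((h₂.weakRelease h₁).congr fun _ _ => not_strongUntil_iff.symm).mono
    (by simp only [size]; omega)

theorem tracksSat_lF (h : TracksSat .finite φ) : TracksSat .finite (lF φ) :=
  tracksSat_lsu h (tracksSat_tt _)

theorem tracksUnsat_lF (h : TracksUnsat .all φ) : TracksUnsat d (lF φ) :=
  tracksUnsat_lsu h (tracksUnsat_tt _)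

theorem tracksSat_lG (h : TracksSat .all φ) : TracksSat d (lG φ) :=
  tracksSat_lnot (tracksUnsat_lF (tracksUnsat_lnot h))

theorem tracksUnsat_lG (h : TracksUnsat .finite φ) : TracksUnsat .finite (lG φ) :=
  tracksUnsat_lnot (tracksSat_lF (tracksSat_lnot h))

theorem tracksSat_lwu (h₁ : TracksSat d ψ) (h₂ : TracksSat .all φ) : TracksSat d (lwu ψ φ) :=
  ((h₁.weakUntil h₂).congr fun _ _ => sat_lwu.symm).mono
    (by simp only [size, lwu, lG, lF]; omega)

theorem tracksUnsat_lwu (h₁ : TracksUnsat .finite ψ) (h₂ : TracksUnsat .finite φ) :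
    TracksUnsat .finite (lwu ψ φ) :=
  ((h₂.strongRelease h₁).congr fun _ _ => ((not_congr sat_lwu).trans not_weakUntil_iff).symm).mono
    (by simp only [size, lwu, lG, lF]; omega)

mutual

theorem TLG.tracks : ∀ {φ : LTL V}, TLG φ → TracksSat .all φ ∧ TracksUnsat .finite φ
  | _, .var v => ⟨tracksSat_var _ v, tracksUnsat_var _ v⟩
  | _, .not h => ⟨tracksSat_lnot h.tracks.1, tracksUnsat_lnot h.tracks.2⟩
  | _, .and h₁ h₂ =>
    ⟨tracksSat_land h₁.tracks.1 h₂.tracks.1, tracksUnsat_land h₁.tracks.2 h₂.tracks.2⟩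
  | _, .or h₁ h₂ => ⟨tracksSat_lor h₁.tracks.1 h₂.tracks.1, tracksUnsat_lor h₁.tracks.2 h₂.tracks.2⟩
  | _, .next h => ⟨tracksSat_lnext h.tracks.1, tracksUnsat_lnext h.tracks.2⟩
  | _, .alw h => ⟨tracksSat_lG h.tracks.1, tracksUnsat_lG h.tracks.2⟩
  | _, .wu h₁ h₂ => ⟨tracksSat_lwu h₁.tracks.1 h₂.tracks.1, tracksUnsat_lwu h₁.tracks.2 h₂.tracks.2⟩

theorem TLF.tracks : ∀ {φ : LTL V}, TLF φ → TracksUnsat .all φ ∧ TracksSat .finite φ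
  | _, .var v => ⟨tracksUnsat_var _ v, tracksSat_var _ v⟩
  | _, .not h => ⟨tracksUnsat_lnot h.tracks.1, tracksSat_lnot h.tracks.2⟩
  | _, .and h₁ h₂ =>
    ⟨tracksUnsat_land h₁.tracks.1 h₂.tracks.1, tracksSat_land h₁.tracks.2 h₂.tracks.2⟩
  | _, .or h₁ h₂ => ⟨tracksUnsat_lor h₁.tracks.1 h₂.tracks.1, tracksSat_lor h₁.tracks.2 h₂.tracks.2⟩
  | _, .next h => ⟨tracksUnsat_lnext h.tracks.1, tracksSat_lnext h.tracks.2⟩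
  | _, .ev h => ⟨tracksUnsat_lF h.tracks.1, tracksSat_lF h.tracks.2⟩
  | _, .su h₁ h₂ => ⟨tracksUnsat_lsu h₁.tracks.1 h₂.tracks.1, tracksSat_lsu h₁.tracks.2 h₂.tracks.2⟩

end

theorem TLPrefix.tracks {φ : LTL V} (h : TLPrefix φ) :
    TracksSat .finite φ ∧ TracksUnsat .finite φ := by
  induction h with
  | g h => exact ⟨h.tracks.1.of_all, h.tracks.2⟩
  | f h => exact ⟨h.tracks.2, h.tracks.1.of_all⟩
  | not _ ih => exact ⟨tracksSat_lnot ih.2, tracksUnsat_lnot ih.1⟩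
  | and _ _ ih₁ ih₂ => exact ⟨tracksSat_land ih₁.1 ih₂.1, tracksUnsat_land ih₁.2 ih₂.2⟩
  | or _ _ ih₁ ih₂ => exact ⟨tracksSat_lor ih₁.1 ih₂.1, tracksUnsat_lor ih₁.2 ih₂.2⟩

mutual

theorem TLGF.tracksUnsat : ∀ {φ : LTL V}, TLGF φ → TracksUnsat .finite φ
  | _, .pre h => h.tracks.2
  | _, .not h => tracksUnsat_lnot h.tracksSat
  | _, .and h₁ h₂ => tracksUnsat_land h₁.tracksUnsat h₂.tracksUnsat
  | _, .or h₁ h₂ => tracksUnsat_lor h₁.tracksUnsat h₂.tracksUnsat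
  | _, .next h => tracksUnsat_lnext h.tracksUnsat
  | _, .alw h => tracksUnsat_lG h.tracksUnsat
  | _, .wu h₁ h₂ => tracksUnsat_lwu h₁.tracksUnsat h₂.tracksUnsat
  | _, .suF h₁ h₂ => tracksUnsat_lsu h₁.tracks.1 h₂.tracksUnsat

theorem TLFG.tracksSat : ∀ {φ : LTL V}, TLFG φ → TracksSat .finite φ
  | _, .pre h => h.tracks.1
  | _, .not h => tracksSat_lnot h.tracksUnsat
  | _, .and h₁ h₂ => tracksSat_land h₁.tracksSat h₂.tracksSat
  | _, .or h₁ h₂ => tracksSat_lor h₁.tracksSat h₂.tracksSat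
  | _, .next h => tracksSat_lnext h.tracksSat
  | _, .ev h => tracksSat_lF h.tracksSat
  | _, .su h₁ h₂ => tracksSat_lsu h₁.tracksSat h₂.tracksSat
  | _, .wuG h₁ h₂ => tracksSat_lwu h₁.tracksSat h₂.tracks.1

end

end Formulas

namespace NCW

variable {V Q : Type} (A : NCW V Q) (c : Set V → Q → Q → Prop) {w : ℕ → Set V}

def post (R : Set Q) (a : Set V) : Set Q :=
  {q' | ∃ q ∈ R, A.step a q q'}

def breakpointInit (a : Set V) : Set Q × Set Q :=
  ({q' | ∃ q, A.step a q q' ∧ c a q q'}, ∅)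

open scoped Classical in
def breakpointStep (p : Set Q × Set Q) (a : Set V) : Set Q × Set Q :=
  (A.post p.1 a, (if p.2 = ∅ then A.post p.1 a else A.post p.2 a) ∩ {q | A.acc q})

-- After reading `w 0, …, w t`: the states reached by runs that claim `c` at time `0`, and those
-- among them that have stayed accepting since the second component was last empty.
def breakpointSets (w : ℕ → Set V) : ℕ → Set Q × Set Q
  | 0 => A.breakpointInit c (w 0)
  | t + 1 => A.breakpointStep (breakpointSets w t) (w (t + 1))

open scoped Classical in
noncomputable def encode (p : Set Q × Set Q) (q : Q) : Fin 3 :=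
  if q ∈ p.2 then 2 else if q ∈ p.1 then 1 else 0

def decode (f : Q → Fin 3) : Set Q × Set Q :=
  ({q | f q ≠ 0}, {q | f q = 2})

noncomputable def breakpointTransition : Option (Q → Fin 3) → Set V → Option (Q → Fin 3)
  | none, a => some (encode (A.breakpointInit c a))
  | some f, a => some (encode (A.breakpointStep (decode f) a))

def breakpointFinal : Set (Option (Q → Fin 3)) :=
  {s | ∃ f ∈ s, ∃ q, f q = 2}

variable {A c}

theorem encode_eq_two {p : Set Q × Set Q} {q : Q} : encode p q = 2 ↔ q ∈ p.2 := by
  unfold encode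
  split_ifs <;> simp_all

theorem decode_encode {p : Set Q × Set Q} (h : p.2 ⊆ p.1) : decode (encode p) = p := by
  ext q
  · by_cases h₂ : q ∈ p.2
    · simp [decode, encode, h₂, h h₂]
    · by_cases h₁ : q ∈ p.1 <;> simp [decode, encode, h₁, h₂]
  · exact encode_eq_two

theorem post_mono {R R' : Set Q} (h : R ⊆ R') (a : Set V) : A.post R a ⊆ A.post R' a :=
  fun _ ⟨q, hq, hstep⟩ => ⟨q, h hq, hstep⟩

theorem breakpointSets_snd_subset_fst (t : ℕ) :
    (A.breakpointSets c w t).2 ⊆ (A.breakpointSets c w t).1 := by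
  cases t with
  | zero => exact empty_subset _
  | succ t =>
    refine inter_subset_left.trans ?_
    split_ifs
    exacts [subset_rfl, post_mono (breakpointSets_snd_subset_fst t) _]

theorem breakpointSets_snd_subset_acc (t : ℕ) : (A.breakpointSets c w t).2 ⊆ {q | A.acc q} := by
  cases t with
  | zero => exact empty_subset _
  | succ t => exact inter_subset_right

theorem detRun_breakpointTransition_succ (t : ℕ) :
    detRun (A.breakpointTransition c) none w (t + 1) = some (encode (A.breakpointSets c w t)) := by
  induction t with
  | zero => rfl
  | succ t ih =>
    rw [detRun, ih, breakpointTransition, decode_encode (breakpointSets_snd_subset_fst t)]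
    rfl

theorem eventually_mem_breakpointFinal_iff :
    (∀ᶠ t in atTop, detRun (A.breakpointTransition c) none w t ∈ breakpointFinal) ↔
      ∀ᶠ t in atTop, (A.breakpointSets c w t).2.Nonempty := by
  conv_lhs => rw [← map_add_atTop_eq_nat 1]
  simp only [eventually_map, detRun_breakpointTransition_succ, breakpointFinal, mem_ofPred_eq,
    Option.mem_def, Option.some.injEq, exists_eq_left', encode_eq_two]
  rfl

theorem breakpointSets_succ_snd_subset {t : ℕ} (h : (A.breakpointSets c w t).2.Nonempty) :
    (A.breakpointSets c w (t + 1)).2 ⊆ A.post (A.breakpointSets c w t).2 (w (t + 1)) := by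
  refine inter_subset_left.trans ?_
  rw [if_neg h.ne_empty]

theorem mem_breakpointSets_fst {b : ℕ → Q} (hb : ∀ t, A.step (w t) (b t) (b (t + 1)))
    (hc : c (w 0) (b 0) (b 1)) : ∀ t, b (t + 1) ∈ (A.breakpointSets c w t).1
  | 0 => ⟨b 0, hb 0, hc⟩
  | t + 1 => ⟨b (t + 1), mem_breakpointSets_fst hb hc t, hb (t + 1)⟩

theorem eventually_nonempty_of_accepts {b : ℕ → Q} (hb : A.Accepts w b)
    (hc : c (w 0) (b 0) (b 1)) : ∀ᶠ t in atTop, (A.breakpointSets c w t).2.Nonempty := by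
  obtain ⟨N, hN⟩ := eventually_atTop.1 hb.2
  have hstay : ∀ t, N ≤ t →
      ((A.breakpointSets c w t).2 = ∅ ∨ b (t + 1) ∈ (A.breakpointSets c w t).2) →
      b (t + 2) ∈ (A.breakpointSets c w (t + 1)).2 := by
    intro t ht hO
    refine ⟨?_, hN (t + 2) (by omega)⟩
    split_ifs with h
    exacts [⟨b (t + 1), mem_breakpointSets_fst hb.1 hc t, hb.1 (t + 1)⟩,
      ⟨b (t + 1), hO.resolve_left h, hb.1 (t + 1)⟩]
  by_cases hempty : ∃ t₀, N ≤ t₀ ∧ (A.breakpointSets c w t₀).2 = ∅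
  · obtain ⟨t₀, ht₀, h₀⟩ := hempty
    have hin : ∀ t, t₀ + 1 ≤ t → b (t + 1) ∈ (A.breakpointSets c w t).2 := by
      intro t ht
      induction t, ht using Nat.le_induction with
      | base => exact hstay t₀ ht₀ (.inl h₀)
      | succ t ht ih => exact hstay t (by omega) (.inr ih)
    exact eventually_atTop.2 ⟨t₀ + 1, fun t ht => ⟨_, hin t ht⟩⟩
  · push Not at hempty
    exact eventually_atTop.2 ⟨N, hempty⟩

theorem exists_accepts_of_eventually_nonempty [Finite Q]
    (h : ∀ᶠ t in atTop, (A.breakpointSets c w t).2.Nonempty) :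
    ∃ b, A.Accepts w b ∧ c (w 0) (b 0) (b 1) := by
  obtain ⟨M, hM⟩ := eventually_atTop.1 h
  -- Reachable sets before `M`, breakpoint sets (which are no longer reset) from `M` on: every
  -- state of a level has a predecessor in the previous one, so Kőnig's lemma threads a run through.
  let S : ℕ → Set Q := fun t =>
    if t < M then (A.breakpointSets c w t).1 else (A.breakpointSets c w t).2
  have hS_fst : ∀ t, S t ⊆ (A.breakpointSets c w t).1 := fun t => by
    dsimp only [S]
    split_ifs
    exacts [subset_rfl, breakpointSets_snd_subset_fst t]
  have hS_snd : ∀ t, M ≤ t → S t = (A.breakpointSets c w t).2 := fun t ht => if_neg (by omega)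
  have hpred : ∀ t, ∀ q' ∈ S (t + 1), ∃ q ∈ S t, A.step (w (t + 1)) q q' := by
    intro t q' hq'
    by_cases ht : t < M
    · obtain ⟨q, hq, hstep⟩ := hS_fst (t + 1) hq'
      exact ⟨q, by rwa [show S t = _ from if_pos ht], hstep⟩
    · rw [hS_snd t (by omega)]
      rw [hS_snd (t + 1) (by omega)] at hq'
      exact breakpointSets_succ_snd_subset (hM t (by omega)) hq'
  obtain ⟨β, hβ⟩ := exists_path_of_frequently_nonempty
    (eventually_atTop.2 ⟨M, fun t ht => hS_snd t ht ▸ hM t ht⟩).frequently hpred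
  obtain ⟨q₀, hstep₀, hc₀⟩ := hS_fst 0 (hβ 0).1
  refine ⟨fun | 0 => q₀ | t + 1 => β t, ⟨fun | 0 => hstep₀ | t + 1 => (hβ t).2, ?_⟩, hc₀⟩
  refine eventually_atTop.2 ⟨M + 1, fun | 0, h0 => absurd h0 (by omega) | t + 1, ht => ?_⟩
  exact breakpointSets_snd_subset_acc t (hS_snd t (by omega) ▸ (hβ t).1)

theorem eventually_mem_breakpointFinal_iff_exists_accepts [Finite Q] :
    (∀ᶠ t in atTop, detRun (A.breakpointTransition c) none w t ∈ breakpointFinal) ↔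
      ∃ b, A.Accepts w b ∧ c (w 0) (b 0) (b 1) := by
  rw [eventually_mem_breakpointFinal_iff]
  exact ⟨exists_accepts_of_eventually_nonempty,
    fun ⟨_, hb, hc⟩ => eventually_nonempty_of_accepts hb hc⟩

theorem card_breakpoint_le [Fintype Q] [DecidableEq Q] {n : ℕ} (h : 2 * Fintype.card Q ≤ 2 ^ n) :
    Fintype.card (Option (Q → Fin 3)) ≤ 2 ^ 2 ^ n := by
  simpa [Fintype.card_option, Fintype.card_fun] using three_pow_add_one_le h

end NCW

end LTL

/-- every `TL_FG` formula `Φ` is recognized by a deterministic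
ω-automaton with a co-Büchi acceptance condition and at most `2 ^ 2 ^ |Φ|` states. -/
theorem tlFG_deterministic_cobuechi_automaton
    {V : Type} [Fintype V] (Φ : LTL V) (hΦ : LTL.TLFG Φ) :
    ∃ (S : Type) (_ : Fintype S) (s0 : S) (δ : S → Set V → S) (F : Set S),
      Fintype.card S ≤ 2 ^ (2 ^ LTL.size Φ) ∧
      ∀ w : ℕ → Set V,
        ((∃ N, ∀ t, N ≤ t → detRun δ s0 w t ∈ F) ↔ LTL.Sat w Φ 0) := by
  classical
  obtain ⟨Q, _, A, c, hcard, hsound, hcomplete⟩ := hΦ.tracksSat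
  have := Fintype.ofFinite Q
  refine ⟨Option (Q → Fin 3), inferInstance, none, A.breakpointTransition c,
    LTL.NCW.breakpointFinal, LTL.NCW.card_breakpoint_le (Nat.card_eq_fintype_card (α := Q) ▸ hcard),
    fun w => ?_⟩
  rw [← eventually_atTop, LTL.NCW.eventually_mem_breakpointFinal_iff_exists_accepts]
  refine ⟨fun ⟨b, hb, hc⟩ => hsound w b hb 0 hc, fun h => ?_⟩
  obtain ⟨b, hb, hc⟩ := hcomplete w {0} (finite_singleton 0) (by simpa using h)
  exact ⟨b, hb, hc 0 rfl⟩
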